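/- Fix β > log 4 and K > 0. Then every global minimum point z of G_{β,K} over ℝ satisfies G_{β,K}''(z) > 0; in particular, whenever 0 is a global minimum point of G_{β,K}, G_{β,K}''(0) > 0, and every nonzero global minimum point z satisfies G_{β,K}''(z) > 0. -/

import Mathlib

/-! With `s = e^{-β}` and `b = 2βK` we have `G(z) = b z² / 2 - c(b z)` and
`G''(z) = b (1 - b c''(b z))`, where `c = c_β` is the cumulant generating function of a spin
taking the values `-1, 0, 1` with weights `s, 1, s`. For `s < 1/4` its third derivative is
positive on `(0, a)` and negative on `(a, ∞)`, where `2 s cosh a = 1 - 8 s²`.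

If `0` is a minimum point with `b c''(0) ≥ 1`, then `c(a) > c''(0) a² / 2 ≥ a² / (2b)`, that is
`G(a / b) < G(0)`. At a minimum point `z > 0` we have `c'(t) = z` for `t = b z`, hence
`G(z) = t c'(t) / 2 - c(t) ≤ G(0) = 0`; the sign pattern of `c'''` shows that this forces
`t c''(t) < c'(t) = t / b`. Negative minimum points are handled by evenness. -/

noncomputable section

/-- `c_β(t) = log[(1 + e^{−β}(e^t + e^{−t}))/(1 + 2e^{−β})]`. -/
def cBeta (β t : ℝ) : ℝ :=
  Real.log ((1 + Real.exp (-β) * (Real.exp t + Real.exp (-t))) / (1 + 2 * Real.exp (-β)))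

/-- `G_{β,K}(z) = βK z² − c_β(2βK z)`. -/
def Gfun (β K z : ℝ) : ℝ := β * K * z ^ 2 - cBeta β (2 * β * K * z)

open Real Set

section MeanValue

variable {f f' : ℝ → ℝ} {a b : ℝ}

lemma lt_of_hasDerivAt_pos (hf : ∀ x, HasDerivAt f (f' x) x) (hab : a < b)
    (hpos : ∀ x ∈ Ioo a b, 0 < f' x) : f a < f b := by
  obtain ⟨c, hc, hslope⟩ := exists_hasDerivAt_eq_slope f f' hab
    (fun x _ => (hf x).continuousAt.continuousWithinAt) (fun x _ => hf x)
  have := hpos c hc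
  rw [hslope, div_pos_iff_of_pos_right (sub_pos.2 hab)] at this
  linarith

lemma lt_of_hasDerivAt_neg (hf : ∀ x, HasDerivAt f (f' x) x) (hab : a < b)
    (hneg : ∀ x ∈ Ioo a b, f' x < 0) : f b < f a := by
  have := lt_of_hasDerivAt_pos (fun x => (hf x).neg) hab fun x hx => neg_pos.2 (hneg x hx)
  simp only [Pi.neg_apply] at this
  linarith

end MeanValue

section SignPattern

variable {c c' c'' c''' : ℝ → ℝ} {a : ℝ}

lemma quadratic_lt_of_deriv_three_pos (hc : ∀ t, HasDerivAt c (c' t) t)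
    (hc' : ∀ t, HasDerivAt c' (c'' t) t) (hc'' : ∀ t, HasDerivAt c'' (c''' t) t)
    (h0 : c 0 = 0) (h0' : c' 0 = 0) (ha : 0 < a) (hpos : ∀ t ∈ Ioo 0 a, 0 < c''' t) :
    c'' 0 * a ^ 2 / 2 < c a := by
  have hc''_gt : ∀ x ∈ Ioc 0 a, c'' 0 < c'' x := fun x hx =>
    lt_of_hasDerivAt_pos hc'' hx.1 fun y hy => hpos y ⟨hy.1, hy.2.trans_le hx.2⟩
  have hc'_gt : ∀ x ∈ Ioc 0 a, c'' 0 * x < c' x := by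
    intro x hx
    have := lt_of_hasDerivAt_pos (f := fun y => c' y - c'' 0 * y)
      (fun y => ((hc' y).sub ((hasDerivAt_id y).const_mul (c'' 0))).congr_deriv (by simp))
      hx.1 fun y hy => sub_pos.2 (hc''_gt y ⟨hy.1, hy.2.le.trans hx.2⟩)
    simp only [h0', mul_zero, sub_zero] at this
    linarith
  have := lt_of_hasDerivAt_pos (f := fun y => c y - c'' 0 * y ^ 2 / 2)
    (fun y => ((hc y).sub (((hasDerivAt_pow 2 y).const_mul (c'' 0)).div_const 2)).congr_deriv
      (by ring)) ha fun y hy => sub_pos.2 (hc'_gt y ⟨hy.1, hy.2.le⟩)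
  simp only [h0] at this
  linarith

lemma mul_deriv_two_lt_deriv (hc : ∀ t, HasDerivAt c (c' t) t)
    (hc' : ∀ t, HasDerivAt c' (c'' t) t) (hc'' : ∀ t, HasDerivAt c'' (c''' t) t)
    (h0 : c 0 = 0) (h0' : c' 0 = 0) (ha : 0 < a) (hpos : ∀ t ∈ Ioo 0 a, 0 < c''' t)
    (hneg : ∀ t ∈ Ioi a, c''' t < 0) {t : ℝ} (ht : 0 < t) (hle : t * c' t / 2 ≤ c t) :
    t * c'' t < c' t := by
  set ψ : ℝ → ℝ := fun y => y * c'' y - c' y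
  set F : ℝ → ℝ := fun y => y * c' y / 2 - c y
  have hψ : ∀ x, HasDerivAt ψ (x * c''' x) x := fun x =>
    (((hasDerivAt_id x).mul (hc'' x)).sub (hc' x)).congr_deriv (by simp)
  have hF : ∀ x, HasDerivAt F (ψ x / 2) x := fun x =>
    ((((hasDerivAt_id x).mul (hc' x)).div_const 2).sub (hc x)).congr_deriv (by simp [ψ]; ring)
  have hψ0 : ψ 0 = 0 := by simp [ψ, h0']
  have hF0 : F 0 = 0 := by simp [F, h0]
  have hψ_pos : ∀ x ∈ Ioc 0 a, 0 < ψ x := fun x hx => hψ0 ▸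
    lt_of_hasDerivAt_pos hψ hx.1 fun y hy => mul_pos hy.1 (hpos y ⟨hy.1, hy.2.trans_le hx.2⟩)
  have hF_pos : ∀ x ∈ Ioc 0 a, 0 < F x := fun x hx => hF0 ▸
    lt_of_hasDerivAt_pos hF hx.1 fun y hy => half_pos (hψ_pos y ⟨hy.1, hy.2.le.trans hx.2⟩)
  by_contra! hψt
  replace hψt : 0 ≤ ψ t := sub_nonneg.2 hψt
  have hat : a < t := by
    by_contra! hta
    exact (hF_pos t ⟨ht, hta⟩).not_ge (sub_nonpos.2 hle)
  -- past `a`, `ψ` decreases to `ψ t ≥ 0`, so `F` keeps increasing from `F a > 0`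
  have hψ_gt : ∀ x ∈ Ico a t, ψ t < ψ x := fun x hx =>
    lt_of_hasDerivAt_neg hψ hx.2 fun y hy =>
      mul_neg_of_pos_of_neg (ha.trans_le (hx.1.trans hy.1.le)) (hneg y (hx.1.trans_lt hy.1))
  have := lt_of_hasDerivAt_pos hF hat fun y hy => half_pos (hψt.trans_lt (hψ_gt y ⟨hy.1.le, hy.2⟩))
  have := hF_pos a ⟨ha, le_rfl⟩
  simp only [F] at *
  linarith

end SignPattern

def spinCgf (s t : ℝ) : ℝ := log ((1 + 2 * s * cosh t) / (1 + 2 * s))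

def spinCgf' (s t : ℝ) : ℝ := 2 * s * sinh t / (1 + 2 * s * cosh t)

def spinCgf'' (s t : ℝ) : ℝ := (2 * s * cosh t + 4 * s ^ 2) / (1 + 2 * s * cosh t) ^ 2

def spinCgf''' (s t : ℝ) : ℝ :=
  2 * s * sinh t * (1 - 8 * s ^ 2 - 2 * s * cosh t) / (1 + 2 * s * cosh t) ^ 3

section SpinCgf

variable {s : ℝ}

lemma one_add_two_mul_cosh_pos (hs : 0 ≤ s) (t : ℝ) : 0 < 1 + 2 * s * cosh t := by
  have := cosh_pos t
  positivity

lemma hasDerivAt_spinCgf (hs : 0 ≤ s) (t : ℝ) : HasDerivAt (spinCgf s) (spinCgf' s t) t := by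
  have hD := one_add_two_mul_cosh_pos hs t
  refine ((((hasDerivAt_cosh t).const_mul (2 * s)).const_add 1).div_const (1 + 2 * s)).log
    (by positivity) |>.congr_deriv ?_
  unfold spinCgf'
  field_simp

lemma hasDerivAt_spinCgf' (hs : 0 ≤ s) (t : ℝ) : HasDerivAt (spinCgf' s) (spinCgf'' s t) t := by
  have hD := one_add_two_mul_cosh_pos hs t
  refine (((hasDerivAt_sinh t).const_mul (2 * s)).div
    (((hasDerivAt_cosh t).const_mul (2 * s)).const_add 1) hD.ne').congr_deriv ?_
  unfold spinCgf''
  field_simp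
  linear_combination (4 * s ^ 2) * cosh_sq t

lemma hasDerivAt_spinCgf'' (hs : 0 ≤ s) (t : ℝ) :
    HasDerivAt (spinCgf'' s) (spinCgf''' s t) t := by
  have hD := one_add_two_mul_cosh_pos hs t
  refine ((((hasDerivAt_cosh t).const_mul (2 * s)).add_const (4 * s ^ 2)).div
    ((((hasDerivAt_cosh t).const_mul (2 * s)).const_add 1).fun_pow 2) (by positivity)).congr_deriv ?_
  unfold spinCgf'''
  field_simp
  ring

lemma spinCgf_zero (hs : 0 ≤ s) : spinCgf s 0 = 0 := by
  rw [spinCgf, cosh_zero, mul_one, div_self (by positivity), log_one]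

lemma spinCgf'_zero (s : ℝ) : spinCgf' s 0 = 0 := by
  simp [spinCgf']

lemma spinCgf_neg (s t : ℝ) : spinCgf s (-t) = spinCgf s t := by
  rw [spinCgf, cosh_neg, spinCgf]

lemma spinCgf''_neg (s t : ℝ) : spinCgf'' s (-t) = spinCgf'' s t := by
  rw [spinCgf'', cosh_neg, spinCgf'']

lemma exists_spinCgf'''_sign (hs : 0 < s) (hs4 : s < 1 / 4) :
    ∃ a > 0, (∀ t ∈ Ioo 0 a, 0 < spinCgf''' s t) ∧ ∀ t ∈ Ioi a, spinCgf''' s t < 0 := by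
  have hκ : 1 < (1 - 8 * s ^ 2) / (2 * s) := by
    rw [one_lt_div (by positivity)]
    nlinarith
  set a := arcosh ((1 - 8 * s ^ 2) / (2 * s))
  have ha : 0 < a := arcosh_pos hκ
  have hfactor : ∀ t, spinCgf''' s t
      = 4 * s ^ 2 * sinh t * (cosh a - cosh t) / (1 + 2 * s * cosh t) ^ 3 := by
    intro t
    rw [spinCgf''', cosh_arcosh hκ.le]
    field_simp
    ring
  refine ⟨a, ha, fun t ht => ?_, fun t ht => ?_⟩
  · have hcosh : cosh t < cosh a := by
      rw [cosh_lt_cosh, abs_of_pos ht.1, abs_of_pos ha]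
      exact ht.2
    have := sinh_pos_iff.2 ht.1
    have := one_add_two_mul_cosh_pos hs.le t
    rw [hfactor]
    exact div_pos (mul_pos (by positivity) (sub_pos.2 hcosh)) (by positivity)
  · have ht0 : 0 < t := ha.trans ht
    have hcosh : cosh a < cosh t := by
      rw [cosh_lt_cosh, abs_of_pos ht0, abs_of_pos ha]
      exact ht
    have := sinh_pos_iff.2 ht0
    have := one_add_two_mul_cosh_pos hs.le t
    rw [hfactor]
    exact div_neg_of_neg_of_pos (mul_neg_of_pos_of_neg (by positivity) (sub_neg.2 hcosh))
      (by positivity)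

end SpinCgf

def freeEnergy (b s z : ℝ) : ℝ := b * z ^ 2 / 2 - spinCgf s (b * z)

lemma Gfun_eq_freeEnergy (β K : ℝ) : Gfun β K = freeEnergy (2 * β * K) (exp (-β)) := by
  funext z
  rw [Gfun, freeEnergy, cBeta, spinCgf, cosh_eq]
  ring_nf

section FreeEnergy

variable {b s z : ℝ}

lemma freeEnergy_zero (hs : 0 ≤ s) (b : ℝ) : freeEnergy b s 0 = 0 := by
  simp [freeEnergy, spinCgf_zero hs]

lemma freeEnergy_neg (b s z : ℝ) : freeEnergy b s (-z) = freeEnergy b s z := by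
  rw [freeEnergy, mul_neg, spinCgf_neg, neg_sq, freeEnergy]

lemma hasDerivAt_freeEnergy (hs : 0 ≤ s) (b z : ℝ) :
    HasDerivAt (freeEnergy b s) (b * z - b * spinCgf' s (b * z)) z := by
  have hbz : HasDerivAt (fun z => b * z) b z := by
    simpa using (hasDerivAt_id z).const_mul b
  refine ((((hasDerivAt_pow 2 z).const_mul b).div_const 2).sub
    ((hasDerivAt_spinCgf hs (b * z)).comp z hbz)).congr_deriv ?_
  ring

lemma iteratedDeriv_two_freeEnergy (hs : 0 ≤ s) (b z : ℝ) :
    iteratedDeriv 2 (freeEnergy b s) z = b - b ^ 2 * spinCgf'' s (b * z) := by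
  have hbz : HasDerivAt (fun z => b * z) b z := by
    simpa using (hasDerivAt_id z).const_mul b
  have hderiv : deriv (freeEnergy b s) = fun z => b * z - b * spinCgf' s (b * z) :=
    funext fun z => (hasDerivAt_freeEnergy hs b z).deriv
  rw [iteratedDeriv_succ, iteratedDeriv_one, hderiv]
  refine (hbz.sub (((hasDerivAt_spinCgf' hs (b * z)).comp z hbz).const_mul b)).deriv.trans ?_
  ring

lemma mul_spinCgf''_zero_lt_one (hs : 0 < s) (hs4 : s < 1 / 4) (hb : 0 < b)
    (hmin : IsMinOn (freeEnergy b s) univ 0) : b * spinCgf'' s 0 < 1 := by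
  obtain ⟨a, ha, hpos, -⟩ := exists_spinCgf'''_sign hs hs4
  have hgrowth : spinCgf'' s 0 * a ^ 2 / 2 < spinCgf s a :=
    quadratic_lt_of_deriv_three_pos (hasDerivAt_spinCgf hs.le) (hasDerivAt_spinCgf' hs.le)
      (hasDerivAt_spinCgf'' hs.le) (spinCgf_zero hs.le) (spinCgf'_zero s) ha hpos
  by_contra! h1
  have hle : freeEnergy b s 0 ≤ freeEnergy b s (a / b) := hmin (mem_univ _)
  have hval : freeEnergy b s (a / b) = a ^ 2 / (2 * b) - spinCgf s a := by
    rw [freeEnergy, mul_div_cancel₀ a hb.ne']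
    field_simp
  have hquad : a ^ 2 / (2 * b) ≤ spinCgf'' s 0 * a ^ 2 / 2 := by
    rw [div_le_iff₀ (by positivity)]
    nlinarith [sq_nonneg a]
  rw [freeEnergy_zero hs.le, hval] at hle
  linarith

lemma mul_spinCgf''_lt_one_of_pos (hs : 0 < s) (hs4 : s < 1 / 4) (hb : 0 < b) (hz : 0 < z)
    (hmin : IsMinOn (freeEnergy b s) univ z) : b * spinCgf'' s (b * z) < 1 := by
  obtain ⟨a, ha, hpos, hneg⟩ := exists_spinCgf'''_sign hs hs4
  have hcrit : b * z - b * spinCgf' s (b * z) = 0 :=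
    (hmin.isLocalMin Filter.univ_mem).hasDerivAt_eq_zero (hasDerivAt_freeEnergy hs.le b z)
  have hc' : spinCgf' s (b * z) = z := (mul_left_cancel₀ hb.ne' (sub_eq_zero.1 hcrit)).symm
  have hle : freeEnergy b s z ≤ freeEnergy b s 0 := hmin (mem_univ _)
  rw [freeEnergy_zero hs.le, freeEnergy] at hle
  have h := mul_deriv_two_lt_deriv (hasDerivAt_spinCgf hs.le) (hasDerivAt_spinCgf' hs.le)
    (hasDerivAt_spinCgf'' hs.le) (spinCgf_zero hs.le) (spinCgf'_zero s) ha hpos hneg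
    (mul_pos hb hz) (t := b * z) (by rw [hc']; linarith)
  rw [hc'] at h
  nlinarith

lemma mul_spinCgf''_lt_one (hs : 0 < s) (hs4 : s < 1 / 4) (hb : 0 < b)
    (hmin : IsMinOn (freeEnergy b s) univ z) : b * spinCgf'' s (b * z) < 1 := by
  rcases lt_trichotomy z 0 with hz | rfl | hz
  · have hmin' : IsMinOn (freeEnergy b s) univ (-z) :=
      isMinOn_univ_iff.2 fun y => by
        simpa only [freeEnergy_neg] using isMinOn_univ_iff.1 hmin (-y)
    have := mul_spinCgf''_lt_one_of_pos hs hs4 hb (neg_pos.2 hz) hmin'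
    rwa [mul_neg, spinCgf''_neg] at this
  · simpa using mul_spinCgf''_zero_lt_one hs hs4 hb hmin
  · exact mul_spinCgf''_lt_one_of_pos hs hs4 hb hz hmin

end FreeEnergy

/-- Fix `β > log 4` and `K > 0`.  Every global minimum point `z` of
`G_{β,K}` over `ℝ` satisfies `G_{β,K}''(z) > 0`; in particular this holds for `z = 0`
whenever `0` is a global minimum point, and for every nonzero global minimum point. -/
theorem Gfun_minimum_types_first_order (β K : ℝ) (hβ : Real.log 4 < β) (hK : 0 < K) :
    (∀ z : ℝ, IsMinOn (Gfun β K) Set.univ z → 0 < iteratedDeriv 2 (Gfun β K) z) ∧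
    (IsMinOn (Gfun β K) Set.univ 0 → 0 < iteratedDeriv 2 (Gfun β K) 0) ∧
    (∀ z : ℝ, z ≠ 0 → IsMinOn (Gfun β K) Set.univ z →
      0 < iteratedDeriv 2 (Gfun β K) z) := by
  have hs4 : exp (-β) < 1 / 4 := by
    calc exp (-β) < exp (-log 4) := exp_lt_exp.2 (neg_lt_neg hβ)
      _ = 1 / 4 := by rw [exp_neg, exp_log (by norm_num), one_div]
  have hb : 0 < 2 * β * K := by
    have := (log_pos (by norm_num : (1 : ℝ) < 4)).trans hβ
    positivity
  have key : ∀ z, IsMinOn (Gfun β K) univ z → 0 < iteratedDeriv 2 (Gfun β K) z := by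
    intro z hmin
    rw [Gfun_eq_freeEnergy] at hmin ⊢
    rw [iteratedDeriv_two_freeEnergy (exp_pos _).le]
    have := mul_spinCgf''_lt_one (exp_pos _) hs4 hb hmin
    nlinarith
  exact ⟨key, key 0, fun z _ => key z⟩
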